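/- arXiv:2403.12348 — 2 statements merged into one kernel-verified Lean document; each statement's English description precedes it below -/
import Mathlib

section
/- Let A be a unital algebra and {P₁,…,Pₙ}, {Q₁,…,Qₙ} two sets of idempotents in A, and k ≤ n. Suppose there exist invertible X, Y ∈ A and a permutation Π of {1,…,n} such that X Pᵢ X⁻¹ = Qᵢ for 1 ≤ i ≤ k and Y⁻¹ Pᵢ Y = Q_{Π(i)} for 1 ≤ i ≤ n. Then there exists a bijection σ : {k+1,…,n} → {k+1,…,n} such that for each r with k+1 ≤ r ≤ n there is an invertible Z_r, a finite product of X's and Y's, with Z_r Q_r Z_r⁻¹ = P_{σ(r)}. -/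
/-- Let `A` be a unital algebra, `{Pᵢ}`, `{Qᵢ}` (i = 1,…,n) idempotents,
`k ≤ n`, and suppose invertible `X, Y` and a permutation `Pi` satisfy `X Pᵢ X⁻¹ = Qᵢ`
for `i ≤ k` and `Y⁻¹ Pᵢ Y = Q_{Pi(i)}` for all `i`.  Then there is a bijection `σ` of
`{k+1,…,n}` (extended to a permutation preserving the index range `≥ k`) such that each
`Q_r` with `r > k` is conjugated to `P_{σ(r)}` by some `Z_r` which is a finite product
of `X`'s and `Y`'s. -/
theorem idempotent_rearrangement
    {A : Type*} [Ring A] [Algebra ℂ A]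
    {n k : ℕ} (hk : k ≤ n)
    (P Q : Fin n → A)
    (hP : ∀ i, IsIdempotentElem (P i)) (hQ : ∀ i, IsIdempotentElem (Q i))
    (X Y : Aˣ) (Pi : Equiv.Perm (Fin n))
    (h1 : ∀ i : Fin n, (i : ℕ) < k → (X : A) * P i * ((X⁻¹ : Aˣ) : A) = Q i)
    (h2 : ∀ i : Fin n, ((Y⁻¹ : Aˣ) : A) * P i * (Y : A) = Q (Pi i)) :
    ∃ σ : Equiv.Perm (Fin n),
      (∀ r : Fin n, k ≤ (r : ℕ) → k ≤ ((σ r : Fin n) : ℕ)) ∧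
      ∀ r : Fin n, k ≤ (r : ℕ) →
        ∃ Z : Aˣ, Z ∈ Submonoid.closure ({X, Y} : Set Aˣ) ∧
          (Z : A) * Q r * ((Z⁻¹ : Aˣ) : A) = P (σ r) := by
  classical
  -- Y conjugates Q r to P (Pi⁻¹ r)
  have hY : ∀ r : Fin n, (Y : A) * Q r * ((Y⁻¹ : Aˣ) : A) = P (Pi⁻¹ r) := by
    intro r
    have := h2 (Pi⁻¹ r)
    rw [show Pi (Pi⁻¹ r) = r from Pi.apply_symm_apply r] at this
    rw [← this]
    calc (Y : A) * (((Y⁻¹ : Aˣ) : A) * P (Pi⁻¹ r) * (Y : A)) * ((Y⁻¹ : Aˣ) : A)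
        = ((Y : A) * ((Y⁻¹ : Aˣ) : A)) * P (Pi⁻¹ r) * ((Y : A) * ((Y⁻¹ : Aˣ) : A)) := by
          simp only [mul_assoc]
      _ = P (Pi⁻¹ r) := by
          simp [Units.mul_inv]
  -- the key iterated-conjugation lemma
  have key : ∀ m : ℕ, 0 < m → ∀ r : Fin n,
      (∀ j : ℕ, 0 < j → j < m → ((((Pi⁻¹ ^ j) r : Fin n) : ℕ) < k)) →
      ∃ Z : Aˣ, Z ∈ Submonoid.closure ({X, Y} : Set Aˣ) ∧
        (Z : A) * Q r * ((Z⁻¹ : Aˣ) : A) = P ((Pi⁻¹ ^ m) r) := by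
    intro m
    induction m with
    | zero => intro h; exact absurd h (lt_irrefl 0)
    | succ j ih =>
      intro _ r hmid
      rcases Nat.eq_zero_or_pos j with hj | hj
      · subst hj
        refine ⟨Y, Submonoid.subset_closure (by simp), ?_⟩
        simpa using hY r
      · obtain ⟨Z, hZmem, hZ⟩ := ih hj r (fun i hi1 hi2 => hmid i hi1 (hi2.trans (Nat.lt_succ_self j)))
        set t := (Pi⁻¹ ^ j) r with ht
        have htk : (t : ℕ) < k := hmid j hj (Nat.lt_succ_self j)
        have hX : (X : A) * P t * ((X⁻¹ : Aˣ) : A) = Q t := h1 t htk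
        refine ⟨Y * X * Z, ?_, ?_⟩
        · exact mul_mem (mul_mem (Submonoid.subset_closure (by simp))
            (Submonoid.subset_closure (by simp))) hZmem
        · have hpow : (Pi⁻¹ ^ (j + 1)) r = Pi⁻¹ t := by
            rw [ht, pow_succ', Equiv.Perm.mul_apply]
          rw [hpow, ← hY t, ← hX, ← hZ]
          simp [Units.val_mul, mul_assoc]
  -- nonemptiness for Nat.find
  have hPiOrd : ∀ r : Fin n, k ≤ (r : ℕ) →
      ∃ m : ℕ, 0 < m ∧ k ≤ (((Pi⁻¹ ^ m) r : Fin n) : ℕ) := by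
    intro r hr
    refine ⟨orderOf (Pi⁻¹), orderOf_pos _, ?_⟩
    rw [pow_orderOf_eq_one]
    simpa using hr
  -- the first-return map
  set p : Fin n → Prop := fun i => k ≤ (i : ℕ) with hp
  have hfind : ∀ r : {i : Fin n // p i},
      ∃ m : ℕ, 0 < m ∧ k ≤ (((Pi⁻¹ ^ m) r.1 : Fin n) : ℕ) := fun r => hPiOrd r.1 r.2
  let m : {i : Fin n // p i} → ℕ := fun r => Nat.find (hfind r)
  have hm_pos : ∀ r, 0 < m r := fun r => (Nat.find_spec (hfind r)).1
  have hm_mem : ∀ r, k ≤ (((Pi⁻¹ ^ m r) r.1 : Fin n) : ℕ) := fun r => (Nat.find_spec (hfind r)).2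
  have hm_min : ∀ r, ∀ j, 0 < j → j < m r → ((((Pi⁻¹ ^ j) r.1 : Fin n) : ℕ) < k) := by
    intro r j hj1 hj2
    have := Nat.find_min (hfind r) hj2
    push_neg at this
    exact this hj1
  let g : {i : Fin n // p i} → {i : Fin n // p i} :=
    fun r => ⟨(Pi⁻¹ ^ m r) r.1, hm_mem r⟩
  have hg_inj : Function.Injective g := by
    intro r s hrs
    have heq : (Pi⁻¹ ^ m r) r.1 = (Pi⁻¹ ^ m s) s.1 := congrArg Subtype.val hrs
    -- wlog m r ≤ m s
    have main : ∀ r s : {i : Fin n // p i}, m r ≤ m s →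
        (Pi⁻¹ ^ m r) r.1 = (Pi⁻¹ ^ m s) s.1 → r = s := by
      intro r s hle heq
      have hsub : r.1 = (Pi⁻¹ ^ (m s - m r)) s.1 := by
        have : (Pi⁻¹ ^ m r) r.1 = (Pi⁻¹ ^ m r) ((Pi⁻¹ ^ (m s - m r)) s.1) := by
          rw [heq, ← Equiv.Perm.mul_apply, ← pow_add]
          congr 2
          omega
        exact (Equiv.injective _) this
      rcases Nat.eq_zero_or_pos (m s - m r) with h0 | h0
      · have hmm : m r = m s := by omega
        apply Subtype.ext
        have : (Pi⁻¹ ^ m s) r.1 = (Pi⁻¹ ^ m s) s.1 := by rw [← hmm, heq, hmm]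
        exact Equiv.injective _ this
      · exfalso
        have hlt : m s - m r < m s := by
          have := hm_pos r; omega
        have := hm_min s _ h0 hlt
        rw [← hsub] at this
        exact absurd r.2 (by omega)
    rcases le_total (m r) (m s) with h | h
    · exact main r s h heq
    · exact (main s r h heq.symm).symm
  have hg_bij : Function.Bijective g := Finite.injective_iff_bijective.mp hg_inj
  let e : Equiv.Perm {i : Fin n // p i} := Equiv.ofBijective g hg_bij
  refine ⟨e.extendDomain (Equiv.refl _), ?_, ?_⟩
  · intro r hr
    rw [Equiv.Perm.extendDomain_apply_subtype _ _ (show p r from hr)]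
    exact (e ⟨r, hr⟩).2
  · intro r hr
    have hσ : (e.extendDomain (Equiv.refl _)) r = (Pi⁻¹ ^ m ⟨r, hr⟩) r := by
      rw [Equiv.Perm.extendDomain_apply_subtype _ _ (show p r from hr)]
      rfl
    rw [hσ]
    exact key (m ⟨r, hr⟩) (hm_pos _) r (hm_min ⟨r, hr⟩)
end

section
/- On the Drury–Arveson space H²_m, the sequence of positive operators Pₙ = Σ_{|α|=n} (n choose α) M_z^α (M_z*)^α converges strongly to zero, where (n choose α) = n!/α! is the multinomial coefficient and M_z^α = M_{z₁}^{α₁}⋯M_{zₘ}^{αₘ}. -/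
set_option synthInstance.maxHeartbeats 1000000
set_option maxHeartbeats 1000000
set_option linter.unusedSectionVars false

noncomputable section

open scoped ComplexInnerProductSpace

open ContinuousLinearMap

/-- `(H, b, M)` is a model of the Drury–Arveson `m`-shift: `b` is the orthonormal basis
given by the normalized monomials `e_α = √(|α|!/α!) z^α` and `M i` is multiplication by
the `i`-th coordinate, which acts as the weighted shift
`M_{zᵢ} e_α = √((αᵢ+1)/(|α|+1)) e_{α+eᵢ}`.  Any Hilbert space with a commuting tuple
acting this way on an orthonormal basis is unitarily equivalent to the Drury–Arveson
`m`-shift. -/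
def IsDruryArveson {m : ℕ} {H : Type*} [NormedAddCommGroup H] [InnerProductSpace ℂ H]
    [CompleteSpace H] (b : HilbertBasis (Fin m → ℕ) ℂ H) (M : Fin m → H →L[ℂ] H) : Prop :=
  ∀ (i : Fin m) (α : Fin m → ℕ),
    M i (b α) = ((Real.sqrt (((α i : ℝ) + 1) / ((∑ j, α j : ℕ) + 1)) : ℝ) : ℂ) •
      b (α + Pi.single i 1)

/-- `M^α = M₁^{α₁} ⋯ Mₘ^{αₘ}` for a multi-index `α`. -/
def powTuple {m : ℕ} {H : Type*} [NormedAddCommGroup H] [InnerProductSpace ℂ H]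
    (M : Fin m → H →L[ℂ] H) (α : Fin m → ℕ) : H →L[ℂ] H :=
  (List.ofFn fun i => M i ^ α i).prod

namespace DAProof

/-! ### Nat combinatorics -/

lemma nat_vander {ι : Type*} [DecidableEq ι] (s : Finset ι) (β : ι → ℕ) (n : ℕ) :
    ∑ α ∈ Finset.piAntidiag s n, ∏ i ∈ s, (β i).choose (α i) = (∑ i ∈ s, β i).choose n := by
  induction s using Finset.cons_induction generalizing n with
  | empty =>
    rcases n with _ | n
    · simp
    · simp [Nat.choose_eq_zero_of_lt]
  | cons a s has ih =>
    rw [Finset.piAntidiag_cons, Finset.sum_disjiUnion]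
    rw [Finset.sum_cons, Nat.add_choose_eq]
    refine Finset.sum_congr rfl fun p hp => ?_
    rw [Finset.sum_map]
    have : ∀ g ∈ Finset.piAntidiag s p.2,
        ∏ i ∈ Finset.cons a s has,
          (β i).choose ((addRightEmbedding fun t => if t = a then p.1 else 0) g i)
        = (β a).choose p.1 * ∏ i ∈ s, (β i).choose (g i) := by
      intro g hg
      rw [Finset.mem_piAntidiag] at hg
      rw [Finset.prod_cons]
      congr 1
      · simp only [addRightEmbedding_apply, Pi.add_apply]
        simp [not_imp_comm.1 (hg.2 a) has]
      · refine Finset.prod_congr rfl fun i hi => ?_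
        simp only [addRightEmbedding_apply, Pi.add_apply,
          if_neg (ne_of_mem_of_not_mem hi has), add_zero]
    rw [Finset.sum_congr rfl this, ← Finset.mul_sum, ih]

lemma nat_main (m n : ℕ) (β : Fin m → ℕ) :
    ∑ α ∈ Finset.Nat.antidiagonalTuple m n,
      Nat.multinomial Finset.univ α * ∏ i, (β i).descFactorial (α i)
      = (∑ i, β i).descFactorial n := by
  rw [← Finset.piAntidiag_univ_fin_eq_antidiagonalTuple]
  have h : ∀ α ∈ Finset.piAntidiag (Finset.univ : Finset (Fin m)) n,
      Nat.multinomial Finset.univ α * ∏ i, (β i).descFactorial (α i)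
        = n.factorial * ∏ i, (β i).choose (α i) := by
    intro α hα
    rw [Finset.mem_piAntidiag] at hα
    have hsum : ∑ i, α i = n := hα.1
    calc Nat.multinomial Finset.univ α * ∏ i, (β i).descFactorial (α i)
        = Nat.multinomial Finset.univ α * ∏ i, ((α i).factorial * (β i).choose (α i)) := by
          simp_rw [Nat.descFactorial_eq_factorial_mul_choose]
      _ = ((∏ i, (α i).factorial) * Nat.multinomial Finset.univ α) * ∏ i, (β i).choose (α i) := by
          rw [Finset.prod_mul_distrib]; ring
      _ = n.factorial * ∏ i, (β i).choose (α i) := by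
          rw [Nat.multinomial_spec, hsum]
  rw [Finset.sum_congr rfl h, ← Finset.mul_sum, nat_vander,
    Nat.descFactorial_eq_factorial_mul_choose]

/-! ### powTuple basics -/

variable {H : Type*} [NormedAddCommGroup H] [InnerProductSpace ℂ H]

lemma powTuple_zero {m : ℕ} (M : Fin m → H →L[ℂ] H) : powTuple M 0 = 1 := by
  unfold powTuple
  refine List.prod_eq_one fun x hx => ?_
  rw [List.mem_ofFn] at hx
  obtain ⟨i, rfl⟩ := hx
  simp

lemma powTuple_succ {m : ℕ} (M : Fin (m + 1) → H →L[ℂ] H) (α : Fin (m + 1) → ℕ) :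
    powTuple M α = M 0 ^ α 0 * powTuple (fun j => M j.succ) (fun j => α j.succ) := by
  unfold powTuple
  rw [List.ofFn_succ, List.prod_cons]

lemma powTuple_add_single {m : ℕ} (M : Fin m → H →L[ℂ] H)
    (hc : ∀ i j, Commute (M i) (M j)) (α : Fin m → ℕ) (i : Fin m) :
    powTuple M (α + Pi.single i 1) = M i * powTuple M α := by
  induction m with
  | zero => exact i.elim0
  | succ k ih =>
    rw [powTuple_succ, powTuple_succ M α]
    induction i using Fin.cases with
    | zero =>
      have h0 : (α + (Pi.single 0 1 : Fin (k+1) → ℕ)) 0 = α 0 + 1 := by simp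
      have htail : (fun j : Fin k => (α + (Pi.single 0 1 : Fin (k+1) → ℕ)) j.succ)
          = fun j => α j.succ := by
        funext j
        simp [Pi.single_apply, Fin.succ_ne_zero j]
      rw [h0, htail, pow_succ']
      rw [mul_assoc]
    | succ i =>
      have h0 : (α + (Pi.single i.succ 1 : Fin (k+1) → ℕ)) 0 = α 0 := by
        simp [Pi.single_apply, (Fin.succ_ne_zero i).symm]
      have htail : (fun j : Fin k => (α + (Pi.single i.succ 1 : Fin (k+1) → ℕ)) j.succ)
          = (fun j => α j.succ) + Pi.single i 1 := by
        funext j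
        simp [Pi.single_apply, Fin.succ_inj]
      rw [h0, htail, ih (fun j => M j.succ) (fun a b => hc a.succ b.succ)]
      rw [← mul_assoc, ← mul_assoc,
        ((hc i.succ 0).pow_right (α 0)).eq]

/-! ### Basis computations -/

variable [CompleteSpace H] {m : ℕ} (b : HilbertBasis (Fin m → ℕ) ℂ H)
  (M : Fin m → H →L[ℂ] H)

lemma basis_ext {x y : H} (h : ∀ γ, ⟪b γ, x⟫ = ⟪b γ, y⟫) : x = y := by
  apply b.repr.injective
  ext γ
  rw [b.repr_apply_apply, b.repr_apply_apply]
  exact h γ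

lemma inner_bb (γ δ : Fin m → ℕ) : ⟪b γ, b δ⟫ = if γ = δ then 1 else 0 := by
  rcases orthonormal_iff_ite.mp b.orthonormal γ δ with h
  simpa using h

lemma sum_add_single (α : Fin m → ℕ) (i : Fin m) :
    (∑ j, (α + (Pi.single i 1 : Fin m → ℕ)) j) = (∑ j, α j) + 1 := by
  simp [Finset.sum_add_distrib, Finset.sum_pi_single']

lemma adj_apply (hDA : IsDruryArveson b M) (i : Fin m) (β : Fin m → ℕ) :
    adjoint (M i) (b β) =
      ((Real.sqrt ((β i : ℝ) / ((∑ j, β j : ℕ) : ℝ)) : ℝ) : ℂ) • b (β - Pi.single i 1) := by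
  apply basis_ext b
  intro γ
  rw [ContinuousLinearMap.adjoint_inner_right, hDA i γ, inner_smul_left, inner_smul_right,
    inner_bb, inner_bb, Complex.conj_ofReal]
  by_cases h1 : γ + Pi.single i 1 = β
  · have hβi : β i = γ i + 1 := by rw [← h1]; simp
    have hsum : (∑ j, β j) = (∑ j, γ j) + 1 := by rw [← h1, sum_add_single]
    have h2 : β - Pi.single i 1 = γ := by
      rw [← h1]; funext j; by_cases hj : j = i <;> simp [hj, Pi.single_apply]
    rw [if_pos h1, if_pos h2.symm, hβi, hsum]
    push_cast
    ring
  · rw [if_neg h1]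
    by_cases h2 : γ = β - Pi.single i 1
    · by_cases h3 : β i = 0
      · rw [if_pos h2, h3]
        simp
      · exfalso
        apply h1
        rw [h2]
        funext j
        by_cases hj : j = i
        · subst hj; simp [Pi.single_apply]; omega
        · simp [hj, Pi.single_apply]
    · rw [if_neg h2]
      simp

lemma commute_M (hDA : IsDruryArveson b M) (i j : Fin m) : Commute (M i) (M j) := by
  rcases eq_or_ne i j with rfl | hij
  · exact Commute.refl _
  have hd : Dense ((Submodule.span ℂ (Set.range b) : Submodule ℂ H) : Set H) := by
    rw [Submodule.dense_iff_topologicalClosure_eq_top, b.dense_span]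
  show (M i * M j) = (M j * M i)
  refine ContinuousLinearMap.ext_on hd ?_
  rintro _ ⟨α, rfl⟩
  have key : ∀ (p q : Fin m), p ≠ q → (M p * M q) (b α)
      = ((Real.sqrt ((((α q : ℝ) + 1) * ((α p : ℝ) + 1))
          / ((((∑ k, α k : ℕ) : ℝ) + 1) * (((∑ k, α k : ℕ) : ℝ) + 2))) : ℝ) : ℂ)
        • b (α + Pi.single q 1 + Pi.single p 1) := by
    intro p q hpq
    rw [ContinuousLinearMap.mul_apply, hDA q α, map_smul, hDA p _]
    rw [smul_smul, ← Complex.ofReal_mul, ← Real.sqrt_mul (by positivity)]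
    congr 3
    rw [div_mul_div_comm]
    congr 1
    · have hval : (α + (Pi.single q 1 : Fin m → ℕ)) p = α p := by
        simp [Pi.single_apply, hpq]
      rw [hval]
    · rw [sum_add_single]; push_cast; ring
  have hmc : ((α j : ℝ) + 1) * ((α i : ℝ) + 1) = ((α i : ℝ) + 1) * ((α j : ℝ) + 1) :=
    mul_comm _ _
  rw [key i j hij, key j i hij.symm, add_right_comm, hmc]

lemma commute_A (hDA : IsDruryArveson b M) (i j : Fin m) :
    Commute (adjoint (M i)) (adjoint (M j)) := by
  have h := commute_M b M hDA j i
  show adjoint (M i) * adjoint (M j) = adjoint (M j) * adjoint (M i)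
  have h' : (M j).comp (M i) = (M i).comp (M j) := h
  rw [ContinuousLinearMap.mul_def, ContinuousLinearMap.mul_def,
    ← ContinuousLinearMap.adjoint_comp, ← ContinuousLinearMap.adjoint_comp, h']

/-! ### Action of powTuple on the basis -/

lemma powA_apply (hDA : IsDruryArveson b M) :
    ∀ (n : ℕ) (α : Fin m → ℕ), (∑ k, α k) = n → ∀ β : Fin m → ℕ,
      powTuple (fun i => adjoint (M i)) α (b β) =
        ((Real.sqrt (((∏ k, (β k).descFactorial (α k) : ℕ) : ℝ)
          / (((∑ k, β k).descFactorial n : ℕ) : ℝ)) : ℝ) : ℂ) • b (β - α) := by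
  intro n
  induction n with
  | zero =>
    intro α hα β
    have hα0 : α = 0 := by
      funext k
      exact Finset.sum_eq_zero_iff.mp hα k (Finset.mem_univ k)
    subst hα0
    rw [powTuple_zero]
    simp
  | succ n ih =>
    intro α hα β
    have hex : ∃ i, α i ≠ 0 := by
      by_contra hc
      push_neg at hc
      rw [Finset.sum_eq_zero (fun k _ => hc k)] at hα
      exact Nat.succ_ne_zero n hα.symm
    obtain ⟨i, hi⟩ := hex
    set α' : Fin m → ℕ := α - Pi.single i 1 with hα'def
    have hdecomp : α = α' + Pi.single i 1 := by
      funext k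
      by_cases hk : k = i
      · subst hk; simp [α', Pi.single_apply]; omega
      · simp [α', Pi.single_apply, hk]
    have hsum' : (∑ k, α' k) = n := by
      rw [hdecomp, sum_add_single] at hα; omega
    rw [hdecomp, powTuple_add_single _ (fun p q => commute_A b M hDA p q),
      ContinuousLinearMap.mul_apply, ih α' hsum' β, map_smul, adj_apply b M hDA i (β - α'),
      smul_smul, ← Complex.ofReal_mul, ← Real.sqrt_mul (by positivity)]
    have hvec : β - α' - Pi.single i 1 = β - (α' + Pi.single i 1) := by
      funext k
      simp only [Pi.sub_apply, Pi.add_apply]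
      omega
    rw [hvec]
    congr 3
    rw [div_mul_div_comm]
    by_cases hle : ∀ k, α' k ≤ β k
    · have hnum : (∏ k, (β k).descFactorial (α' k)) * (β - α') i
          = ∏ k, (β k).descFactorial (((α' + Pi.single i 1 : Fin m → ℕ)) k) := by
        conv_rhs => rw [← Finset.mul_prod_erase Finset.univ _ (Finset.mem_univ i)]
        conv_lhs => rw [← Finset.mul_prod_erase Finset.univ _ (Finset.mem_univ i)]
        have he : ∀ k ∈ Finset.univ.erase i,
            (β k).descFactorial (((α' + Pi.single i 1 : Fin m → ℕ)) k) = (β k).descFactorial (α' k) := by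
          intro k hk
          have : (α' + (Pi.single i 1 : Fin m → ℕ)) k = α' k := by
            simp [Pi.single_apply, Finset.mem_erase.mp hk |>.1]
          rw [this]
        rw [Finset.prod_congr rfl he]
        have hii : (α' + (Pi.single i 1 : Fin m → ℕ)) i = α' i + 1 := by simp
        rw [hii, Nat.descFactorial_succ]
        have : (β - α') i = β i - α' i := rfl
        rw [this]
        ring
      have hsub : (∑ k, (β - α') k) = (∑ k, β k) - n := by
        have : (∑ k, (β - α') k) + n = ∑ k, β k := by
          rw [← hsum', ← Finset.sum_add_distrib]
          exact Finset.sum_congr rfl fun k _ => by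
            have := hle k
            simp only [Pi.sub_apply]
            omega
        omega
      have hden : ((∑ k, β k).descFactorial n) * (∑ k, (β - α') k)
          = (∑ k, β k).descFactorial (n + 1) := by
        rw [Nat.descFactorial_succ, hsub]
        ring
      rw [← Nat.cast_mul, ← Nat.cast_mul, hnum, hden]
    · push_neg at hle
      obtain ⟨k₀, hk₀⟩ := hle
      have h0 : (∏ k, (β k).descFactorial (α' k)) = 0 :=
        Finset.prod_eq_zero (Finset.mem_univ k₀) (Nat.descFactorial_eq_zero_iff_lt.mpr hk₀)
      have h0' : (∏ k, (β k).descFactorial (((α' + Pi.single i 1 : Fin m → ℕ)) k)) = 0 := by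
        refine Finset.prod_eq_zero (Finset.mem_univ k₀) (Nat.descFactorial_eq_zero_iff_lt.mpr ?_)
        have : α' k₀ ≤ (α' + (Pi.single i 1 : Fin m → ℕ)) k₀ := by
          simp only [Pi.add_apply]; omega
        omega
      rw [h0, h0']
      simp

lemma powM_apply (hDA : IsDruryArveson b M) :
    ∀ (n : ℕ) (α : Fin m → ℕ), (∑ k, α k) = n → ∀ β : Fin m → ℕ,
      powTuple M α (b β) =
        ((Real.sqrt (((∏ k, (β k + α k).descFactorial (α k) : ℕ) : ℝ)
          / ((((∑ k, β k) + n).descFactorial n : ℕ) : ℝ)) : ℝ) : ℂ) • b (β + α) := by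
  intro n
  induction n with
  | zero =>
    intro α hα β
    have hα0 : α = 0 := by
      funext k
      exact Finset.sum_eq_zero_iff.mp hα k (Finset.mem_univ k)
    subst hα0
    rw [powTuple_zero]
    simp
  | succ n ih =>
    intro α hα β
    have hex : ∃ i, α i ≠ 0 := by
      by_contra hc
      push_neg at hc
      rw [Finset.sum_eq_zero (fun k _ => hc k)] at hα
      exact Nat.succ_ne_zero n hα.symm
    obtain ⟨i, hi⟩ := hex
    set α' : Fin m → ℕ := α - Pi.single i 1 with hα'def
    have hdecomp : α = α' + Pi.single i 1 := by
      funext k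
      by_cases hk : k = i
      · subst hk; simp [α', Pi.single_apply]; omega
      · simp [α', Pi.single_apply, hk]
    have hsum' : (∑ k, α' k) = n := by
      rw [hdecomp, sum_add_single] at hα; omega
    rw [hdecomp, powTuple_add_single M (fun p q => commute_M b M hDA p q),
      ContinuousLinearMap.mul_apply, ih α' hsum' β, map_smul, hDA i (β + α'),
      smul_smul, ← Complex.ofReal_mul, ← Real.sqrt_mul (by positivity)]
    have hvec : β + α' + Pi.single i 1 = β + (α' + Pi.single i 1) := by
      rw [add_assoc]
    rw [hvec]
    congr 3
    rw [div_mul_div_comm]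
    have hnum : (∏ k, (β k + α' k).descFactorial (α' k)) * ((β + α') i + 1)
        = ∏ k, (β k + ((α' + Pi.single i 1 : Fin m → ℕ)) k).descFactorial (((α' + Pi.single i 1 : Fin m → ℕ)) k) := by
      conv_rhs => rw [← Finset.mul_prod_erase Finset.univ _ (Finset.mem_univ i)]
      conv_lhs => rw [← Finset.mul_prod_erase Finset.univ _ (Finset.mem_univ i)]
      have he : ∀ k ∈ Finset.univ.erase i,
          (β k + ((α' + Pi.single i 1 : Fin m → ℕ)) k).descFactorial (((α' + Pi.single i 1 : Fin m → ℕ)) k)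
            = (β k + α' k).descFactorial (α' k) := by
        intro k hk
        have : (α' + (Pi.single i 1 : Fin m → ℕ)) k = α' k := by
          simp [Pi.single_apply, Finset.mem_erase.mp hk |>.1]
        rw [this]
      rw [Finset.prod_congr rfl he]
      have hii : (α' + (Pi.single i 1 : Fin m → ℕ)) i = α' i + 1 := by simp
      rw [hii]
      have : β i + (α' i + 1) = (β i + α' i) + 1 := by ring
      rw [this, Nat.succ_descFactorial_succ]
      have : (β + α') i + 1 = β i + α' i + 1 := rfl
      rw [this]
      ring
    have hsum2 : (∑ k, (β + α') k) = (∑ k, β k) + n := by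
      rw [← hsum', ← Finset.sum_add_distrib]
      rfl
    have hden : (((∑ k, β k) + n).descFactorial n) * ((∑ k, (β + α') k) + 1)
        = ((∑ k, β k) + (n + 1)).descFactorial (n + 1) := by
      have : (∑ k, β k) + (n + 1) = ((∑ k, β k) + n) + 1 := by ring
      rw [this, Nat.succ_descFactorial_succ, hsum2]
      ring
    have hc1 : ((((β + α') i : ℕ) : ℝ) + 1) = ((((β + α') i + 1 : ℕ)) : ℝ) := by push_cast; ring
    have hc2 : (((∑ j, (β + α') j : ℕ) : ℝ) + 1) = (((∑ j, (β + α') j) + 1 : ℕ) : ℝ) := by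
      push_cast; ring
    rw [hc1, hc2, ← Nat.cast_mul, ← Nat.cast_mul, hnum, hden]

/-! ### The composite operator on basis vectors -/

lemma comp_apply_basis (hDA : IsDruryArveson b M) (n : ℕ) (α : Fin m → ℕ)
    (hα : (∑ k, α k) = n) (β : Fin m → ℕ) :
    powTuple M α (powTuple (fun i => adjoint (M i)) α (b β)) =
      ((((∏ k, (β k).descFactorial (α k) : ℕ) : ℝ)
        / (((∑ k, β k).descFactorial n : ℕ) : ℝ) : ℝ) : ℂ) • b β := by
  rw [powA_apply b M hDA n α hα β, map_smul, powM_apply b M hDA n α hα (β - α)]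
  by_cases hle : ∀ k, α k ≤ β k
  · have hvec : β - α + α = β := by
      funext k
      have := hle k
      simp only [Pi.sub_apply, Pi.add_apply]
      omega
    have hP : ∀ k, (β - α) k + α k = β k := fun k => by
      have := hle k
      simp only [Pi.sub_apply]
      omega
    have hQ : (∑ k, (β - α) k) + n = ∑ k, β k := by
      rw [← hα, ← Finset.sum_add_distrib]
      exact Finset.sum_congr rfl fun k _ => hP k
    rw [hvec, smul_smul, ← Complex.ofReal_mul]
    congr 2
    have harg : (((∏ k, ((β - α) k + α k).descFactorial (α k) : ℕ) : ℝ)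
        / ((((∑ k, (β - α) k) + n).descFactorial n : ℕ) : ℝ))
        = (((∏ k, (β k).descFactorial (α k) : ℕ) : ℝ)
          / (((∑ k, β k).descFactorial n : ℕ) : ℝ)) := by
      rw [hQ]
      congr 2
      exact Finset.prod_congr rfl fun k _ => by rw [hP k]
    rw [harg, Real.mul_self_sqrt (by positivity)]
  · push_neg at hle
    obtain ⟨k₀, hk₀⟩ := hle
    have h0 : (∏ k, (β k).descFactorial (α k)) = 0 :=
      Finset.prod_eq_zero (Finset.mem_univ k₀) (Nat.descFactorial_eq_zero_iff_lt.mpr hk₀)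
    rw [h0]
    simp

lemma Pn_apply_basis (hDA : IsDruryArveson b M) (n : ℕ) (β : Fin m → ℕ) :
    (∑ α ∈ Finset.Nat.antidiagonalTuple m n,
      ((Nat.multinomial Finset.univ α : ℕ) : ℂ) •
        (powTuple M α ((powTuple (fun i => adjoint (M i)) α) (b β))))
      = if n ≤ ∑ k, β k then b β else 0 := by
  have hterm : ∀ α ∈ Finset.Nat.antidiagonalTuple m n,
      ((Nat.multinomial Finset.univ α : ℕ) : ℂ) •
        (powTuple M α ((powTuple (fun i => adjoint (M i)) α) (b β)))
      = ((((Nat.multinomial Finset.univ α * ∏ k, (β k).descFactorial (α k) : ℕ) : ℝ)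
          / (((∑ k, β k).descFactorial n : ℕ) : ℝ) : ℝ) : ℂ) • b β := by
    intro α hα
    have hsum : (∑ k, α k) = n := Finset.Nat.mem_antidiagonalTuple.mp hα
    rw [comp_apply_basis b M hDA n α hsum β, smul_smul]
    congr 1
    push_cast
    ring
  rw [Finset.sum_congr rfl hterm, ← Finset.sum_smul]
  have hcoef : (∑ α ∈ Finset.Nat.antidiagonalTuple m n,
      ((((Nat.multinomial Finset.univ α * ∏ k, (β k).descFactorial (α k) : ℕ) : ℝ)
        / (((∑ k, β k).descFactorial n : ℕ) : ℝ) : ℝ) : ℂ))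
      = ((((∑ k, β k).descFactorial n : ℝ) / (((∑ k, β k).descFactorial n : ℕ) : ℝ) : ℝ) : ℂ) := by
    rw [← Complex.ofReal_sum]
    congr 1
    rw [← Finset.sum_div]
    congr 1
    rw [← Nat.cast_sum]
    rw [nat_main m n β]
  rw [hcoef]
  by_cases hn : n ≤ ∑ k, β k
  · rw [if_pos hn]
    have hne : (((∑ k, β k).descFactorial n : ℕ) : ℝ) ≠ 0 := by
      have := Nat.descFactorial_eq_zero_iff_lt (n := ∑ k, β k) (k := n)
      have hpos : (∑ k, β k).descFactorial n ≠ 0 := by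
        intro hz
        have := (Nat.descFactorial_eq_zero_iff_lt).mp hz
        omega
      exact_mod_cast hpos
    rw [div_self hne]
    simp
  · rw [if_neg hn]
    have hz : (∑ k, β k).descFactorial n = 0 :=
      Nat.descFactorial_eq_zero_iff_lt.mpr (by omega)
    rw [hz]
    simp

end DAProof

/-- On the Drury–Arveson space the positive operators
`Pₙ = Σ_{|α|=n} (n choose α) M_z^α (M_z*)^α` converge strongly to zero. -/
theorem druryArveson_defect_sequence_tendsto_zero
    {H : Type*} [NormedAddCommGroup H] [InnerProductSpace ℂ H] [CompleteSpace H]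
    {m : ℕ} (b : HilbertBasis (Fin m → ℕ) ℂ H) (M : Fin m → H →L[ℂ] H)
    (hDA : IsDruryArveson b M) :
    ∀ x : H, Filter.Tendsto
      (fun n : ℕ => ∑ α ∈ Finset.Nat.antidiagonalTuple m n,
        ((Nat.multinomial Finset.univ α : ℕ) : ℂ) •
          (powTuple M α ((powTuple (fun i => adjoint (M i)) α) x)))
      Filter.atTop (nhds (0 : H)) := by
  intro x
  classical
  set T : ℕ → H →L[ℂ] H := fun n => ∑ α ∈ Finset.Nat.antidiagonalTuple m n,
    ((Nat.multinomial Finset.univ α : ℕ) : ℂ) •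
      ((powTuple M α).comp (powTuple (fun i => adjoint (M i)) α)) with hT
  have hTx : ∀ (n : ℕ) (y : H), (∑ α ∈ Finset.Nat.antidiagonalTuple m n,
      ((Nat.multinomial Finset.univ α : ℕ) : ℂ) •
        (powTuple M α ((powTuple (fun i => adjoint (M i)) α) y))) = T n y := by
    intro n y
    rw [hT]
    simp only [ContinuousLinearMap.coe_sum', Finset.sum_apply,
      ContinuousLinearMap.coe_smul', Pi.smul_apply, ContinuousLinearMap.coe_comp',
      Function.comp_apply]
  have hTb : ∀ (n : ℕ) (β : Fin m → ℕ),
      T n (b β) = if n ≤ ∑ k, β k then b β else 0 := by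
    intro n β
    rw [← hTx n (b β)]
    exact DAProof.Pn_apply_basis b M hDA n β
  set S : ℕ → Finset (Fin m → ℕ) := fun n => (Finset.range n).biUnion
      (fun k => Finset.Nat.antidiagonalTuple m k) with hS
  have hmemS : ∀ (n : ℕ) (β : Fin m → ℕ), β ∈ S n ↔ (∑ k, β k) < n := by
    intro n β
    rw [hS]
    simp only [Finset.mem_biUnion, Finset.mem_range, Finset.Nat.mem_antidiagonalTuple]
    constructor
    · rintro ⟨k, hk, rfl⟩; exact hk
    · intro h; exact ⟨∑ k, β k, h, rfl⟩
  have hf := b.hasSum_repr x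
  have hrepr : ∀ n : ℕ, T n x = x - ∑ β ∈ S n, b.repr x β • b β := by
    intro n
    have h1 : HasSum (fun β => b.repr x β • T n (b β)) (T n x) := by
      have h0 := hf.mapL (T n)
      simpa [map_smul] using h0
    have h2 : HasSum (fun β => if β ∈ S n then b.repr x β • b β else 0)
        (∑ β ∈ S n, b.repr x β • b β) := by
      have h2' := hasSum_sum_of_ne_finset_zero (L := SummationFilter.unconditional _) (s := S n)
        (f := fun β => if β ∈ S n then b.repr x β • b β else 0)
        (fun β hβ => if_neg hβ)
      rwa [Finset.sum_congr rfl (fun β hβ => if_pos hβ)] at h2'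
    have h3 := hf.sub h2
    have heq : (fun β => b.repr x β • b β - if β ∈ S n then b.repr x β • b β else 0)
        = fun β => b.repr x β • T n (b β) := by
      funext β
      rw [hTb n β]
      by_cases hb : β ∈ S n
      · rw [if_pos hb, if_neg (by have := (hmemS n β).mp hb; omega)]
        simp
      · rw [if_neg hb, if_pos (by
          have h' : ¬ (∑ k, β k) < n := fun hlt => hb ((hmemS n β).mpr hlt)
          omega)]
        simp
    rw [heq] at h3
    exact h1.unique h3
  have hmono : Monotone S := by
    intro a c hac
    intro β hβ
    exact (hmemS c β).mpr (lt_of_lt_of_le ((hmemS a β).mp hβ) hac)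
  have hcov : ∀ β : Fin m → ℕ, ∃ n, β ∈ S n :=
    fun β => ⟨(∑ k, β k) + 1, (hmemS _ β).mpr (Nat.lt_succ_self _)⟩
  have hx : Filter.Tendsto (fun n => ∑ β ∈ S n, b.repr x β • b β)
      Filter.atTop (nhds x) :=
    hf.comp (Filter.tendsto_atTop_finset_of_monotone hmono hcov)
  have hfin : Filter.Tendsto (fun n => x - ∑ β ∈ S n, b.repr x β • b β)
      Filter.atTop (nhds (x - x)) := Filter.Tendsto.const_sub x hx
  rw [sub_self] at hfin
  exact hfin.congr fun n => by rw [← hrepr n]; exact (hTx n x).symm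
end
end
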